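/- For X ~ Bin(m, 1/2), the function x ↦ B̄(x)/Ḡ(x), where B̄(x) = P(X ≥ x) and Ḡ(x) = (m - x)/(m+1), is monotone decreasing in x for m/2 ≤ x < m; specifically, for each integer x in this range, B̄(x)/Ḡ(x) - B̄(x+1)/Ḡ(x+1) ≥ 0. -/

import Mathlib

lemma Ssplit (m x : ℕ) (hx : x ≤ m) :
    (∑ z ∈ Finset.Icc x m, m.choose z)
      = m.choose x + ∑ z ∈ Finset.Icc (x+1) m, m.choose z := by
  have h : Finset.Icc x m = insert x (Finset.Icc (x+1) m) := by
    ext z; simp only [Finset.mem_Icc, Finset.mem_insert]; omega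
  rw [h, Finset.sum_insert (by simp)]

lemma keyNat (m : ℕ) : ∀ n x, m - x ≤ n → m ≤ 2*x → x + 2 ≤ m →
    (∑ z ∈ Finset.Icc (x+1) m, m.choose z) * (m - x)
      ≤ (∑ z ∈ Finset.Icc x m, m.choose z) * (m - x - 1) := by
  intro n
  induction n with
  | zero => intro x h1 h2 h3; omega
  | succ n ih =>
    intro x h1 h2 h3
    rcases eq_or_lt_of_le h3 with hbase | hstep
    · -- base case x + 2 = m
      subst hbase
      have hx2 : 2 ≤ x := by omega
      have e1 : x + 2 - x = 2 := by omega
      have e2 : x + 2 - x - 1 = 1 := by omega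
      rw [e2, e1, Ssplit (x+2) x (by omega), Ssplit (x+2) (x+1) (by omega)]
      have e3 : Finset.Icc (x+2) (x+2) = {x+2} := Finset.Icc_self _
      rw [e3, Finset.sum_singleton, Nat.choose_self]
      have hc1 : (x+2).choose (x+1) = x + 2 := Nat.choose_succ_self_right (x+1)
      have hc : (x+2).choose x = (x+2)*(x+1)/2 := by
        have h := Nat.choose_symm (n := x+2) (k := 2) (by omega)
        rw [show x+2-2 = x from rfl] at h
        rw [h, Nat.choose_two_right, show x+2-1 = x+1 from rfl]
      have hge : x + 4 ≤ (x+2).choose x := by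
        rw [hc]
        have h2 : 2 * (x+4) ≤ (x+2)*(x+1) := by nlinarith
        omega
      rw [hc1]
      omega
    · -- inductive step: x + 3 ≤ m
      have hIH := ih (x+1) (by omega) (by omega) (by omega)
      set a := ∑ z ∈ Finset.Icc (x+1) m, m.choose z with ha
      set b := ∑ z ∈ Finset.Icc (x+2) m, m.choose z with hb
      have hsplit1 : a = m.choose (x+1) + b := Ssplit m (x+1) (by omega)
      -- rewrite subtraction in IH
      have e1 : m - (x+1) = (m - x - 2) + 1 := by omega
      have e2 : m - (x+1) - 1 = m - x - 2 := by omega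
      rw [e2, e1] at hIH
      set k := m - x - 2 with hk
      set c := m.choose (x+1) with hc
      -- derive a ≤ c * (k+1)
      have key1 : a ≤ c * (k + 1) := by
        have h4 : a * (k + 1) = c * (k+1) + b * (k+1) := by
          rw [hsplit1]; ring
        have h5 : a * (k + 1) ≤ c * (k+1) + a * k := by
          rw [h4]; exact Nat.add_le_add_left hIH _
        have h6 : a * k + a ≤ c * (k+1) + a * k := by
          calc a * k + a = a * (k+1) := by ring
            _ ≤ c * (k+1) + a * k := h5
        omega
      -- choose x ≥ choose (x+1) since x ≥ m/2
      have hmono : c ≤ m.choose x := by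
        have h7 := Nat.choose_succ_right_eq m x
        have h8 : m - x ≤ x + 1 := by omega
        have h9 : m.choose (x+1) * (x+1) ≤ m.choose x * (x+1) := by
          rw [h7]
          exact Nat.mul_le_mul_left _ h8
        exact Nat.le_of_mul_le_mul_right h9 (by omega)
      have hsplit0 : (∑ z ∈ Finset.Icc x m, m.choose z) = m.choose x + a :=
        Ssplit m x (by omega)
      have e3 : m - x = k + 2 := by omega
      have e4 : m - x - 1 = k + 1 := by omega
      rw [e4, e3, hsplit0]
      calc a * (k+2) = a * (k+1) + a := by ring
        _ ≤ a * (k+1) + c * (k+1) := Nat.add_le_add_left key1 _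
        _ ≤ a * (k+1) + m.choose x * (k+1) := by
            exact Nat.add_le_add_left (Nat.mul_le_mul_right _ hmono) _
        _ = (m.choose x + a) * (k+1) := by ring

/-- For X ~ Bin(m,1/2), the ratio B̄(x)/Ḡ(x) with
B̄(x) = P(X ≥ x) and Ḡ(x) = (m-x)/(m+1) is monotone decreasing for m/2 ≤ x < m. -/
theorem ratio_Bbar_Gbar_decreasing (m : ℕ) (hm : 0 < m) (hme : Even m)
    (Bbar Gbar : ℕ → ℝ)
    (hB : ∀ x, Bbar x = ∑ z ∈ Finset.Icc x m, (m.choose z : ℝ) * (2 : ℝ)⁻¹ ^ m)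
    (hG : ∀ x, Gbar x = ((m : ℝ) - x) / ((m : ℝ) + 1)) :
    ∀ x : ℕ, m / 2 ≤ x → x < m →
      0 ≤ Bbar x / Gbar x - Bbar (x + 1) / Gbar (x + 1) := by
  intro x hx hxm
  have hB' : ∀ y, Bbar y = ((∑ z ∈ Finset.Icc y m, m.choose z : ℕ) : ℝ) * (2:ℝ)⁻¹ ^ m := by
    intro y
    rw [hB y, ← Finset.sum_mul]
    norm_cast
  have hp : (0:ℝ) < (2:ℝ)⁻¹ ^ m := by positivity
  have hBnonneg : ∀ y, 0 ≤ Bbar y := by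
    intro y; rw [hB' y]; positivity
  rcases eq_or_lt_of_le (Nat.succ_le_of_lt hxm) with hlast | hmid
  · -- x + 1 = m : second term is zero
    have hG2 : Gbar (x+1) = 0 := by
      rw [hG, ← hlast]; push_cast; ring_nf
    rw [hG2, div_zero, sub_zero]
    have hG1 : 0 < Gbar x := by
      rw [hG]
      apply div_pos
      · have : (x:ℝ) < m := by exact_mod_cast hxm
        linarith
      · positivity
    exact div_nonneg (hBnonneg x) hG1.le
  · -- x + 2 ≤ m
    have hxm2 : x + 2 ≤ m := hmid
    have hG1 : 0 < Gbar x := by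
      rw [hG]
      apply div_pos
      · have : (x:ℝ) < m := by exact_mod_cast hxm
        linarith
      · positivity
    have hG2 : 0 < Gbar (x+1) := by
      rw [hG]
      apply div_pos
      · have : ((x:ℝ)+1) < m := by exact_mod_cast hmid
        push_cast; linarith
      · positivity
    rw [sub_nonneg, div_le_div_iff₀ hG2 hG1]
    have hkey := keyNat m (m - x) x le_rfl (by obtain ⟨t, ht⟩ := hme; omega) hxm2
    have hkeyR : ((∑ z ∈ Finset.Icc (x+1) m, m.choose z : ℕ) : ℝ) * ((m:ℝ) - x)
        ≤ ((∑ z ∈ Finset.Icc x m, m.choose z : ℕ) : ℝ) * ((m:ℝ) - x - 1) := by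
      have this1 := Nat.cast_le (α := ℝ) |>.mpr hkey
      have e1 : ((m - x : ℕ) : ℝ) = (m:ℝ) - x := by
        rw [Nat.cast_sub (by omega)]
      have e2 : ((m - x - 1 : ℕ) : ℝ) = (m:ℝ) - x - 1 := by
        rw [Nat.cast_sub (by omega), Nat.cast_sub (by omega)]
        push_cast; ring
      rw [Nat.cast_mul, Nat.cast_mul, e1, e2] at this1
      exact this1
    rw [hB' x, hB' (x+1), hG x, hG (x+1)]
    have hm1 : (0:ℝ) < (m:ℝ) + 1 := by positivity
    rw [div_eq_mul_inv ((m:ℝ) - x), div_eq_mul_inv ((m:ℝ) - (x+1:ℕ))]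
    push_cast
    have : ((∑ z ∈ Finset.Icc (x+1) m, m.choose z : ℕ) : ℝ) * ((m:ℝ) - x) * ((2:ℝ)⁻¹ ^ m * ((m:ℝ)+1)⁻¹)
        ≤ ((∑ z ∈ Finset.Icc x m, m.choose z : ℕ) : ℝ) * ((m:ℝ) - x - 1) * ((2:ℝ)⁻¹ ^ m * ((m:ℝ)+1)⁻¹) := by
      apply mul_le_mul_of_nonneg_right hkeyR
      positivity
    push_cast at this
    nlinarith [this]
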